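/- In the group algebra ℚ[ℂˣ], the identity ((1/676)Λ_{4435} − 1)((1/379)Λ_{4435} − 1)((1/266)Λ_{4435} − 1)((1/179)Λ_{4435} − 1) = 5Λ_{4435} + 1 holds. -/

import Mathlib

/-- `Λ n` : the element of the group algebra `ℚ[ℂˣ]` given by the sum of the
basis elements corresponding to the `n`-th roots of unity (junk value `0` for `n = 0`). -/
noncomputable def Lambda (n : ℕ) : MonoidAlgebra ℚ ℂˣ :=
  if h : n = 0 then 0 else
    haveI : NeZero n := ⟨h⟩
    haveI : Fintype (rootsOfUnity n ℂ) := Fintype.ofFinite _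
    ∑ ζ : rootsOfUnity n ℂ, MonoidAlgebra.single (ζ : ℂˣ) (1 : ℚ)

/-!
Since `Λ_n * Λ_n = n • Λ_n`, the element `Λ_n` is annihilated by `X * (X - n)`, so a polynomial
identity in `Λ_n` holds as soon as both sides agree at `X = 0` and at `X = n`. With `n = 4435` and
`wᵢ` the weights, the left-hand side takes the value `1` at `0` and
`∏ᵢ (4435 / wᵢ - 1) = 22176 = 5 * 4435 + 1` at `4435`.
-/

open Polynomial

theorem Lambda_mul_self (n : ℕ) [NeZero n] : Lambda n * Lambda n = (n : ℚ) • Lambda n := by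
  let _ : Fintype (rootsOfUnity n ℂ) := Fintype.ofFinite _
  have hrow (ζ : rootsOfUnity n ℂ) :
      ∑ η : rootsOfUnity n ℂ, MonoidAlgebra.single (ζ * η : ℂˣ) (1 : ℚ) =
        ∑ η : rootsOfUnity n ℂ, MonoidAlgebra.single (η : ℂˣ) (1 : ℚ) :=
    Fintype.sum_equiv (Equiv.mulLeft ζ) _ _ fun _ => rfl
  simp only [Lambda, dif_neg (NeZero.ne n), Finset.sum_mul_sum, MonoidAlgebra.single_mul_single,
    one_mul, hrow, Finset.sum_const, Finset.card_univ, ← Nat.card_eq_fintype_card,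
    Complex.card_rootsOfUnity, Nat.cast_smul_eq_nsmul]

theorem Polynomial.aeval_eq_of_mul_self_eq_smul {R A : Type*} [CommRing R] [Ring A] [Algebra R A]
    {x : A} {m : R} (hm : IsUnit m) (hx : x * x = m • x) {p q : R[X]}
    (h₀ : p.eval 0 = q.eval 0) (h_m : p.eval m = q.eval m) : aeval x p = aeval x q := by
  have hdvd : (X - C 0) * (X - C m) ∣ p - q :=
    (isCoprime_X_sub_C_of_isUnit_sub (by simpa using hm.neg)).mul_dvd
      (dvd_iff_isRoot.2 (by simp [h₀])) (dvd_iff_isRoot.2 (by simp [h_m]))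
  have hann : aeval x ((X - C 0) * (X - C m)) = 0 := by
    simp [mul_sub, hx, Algebra.smul_def, Algebra.commutes]
  obtain ⟨r, hr⟩ := hdvd
  rw [← sub_eq_zero, ← map_sub, hr, map_mul, hann, zero_mul]

theorem alexander_divisor_deg_4435 :
    ((1 / 676 : ℚ) • Lambda 4435 - 1) * ((1 / 379 : ℚ) • Lambda 4435 - 1)
        * ((1 / 266 : ℚ) • Lambda 4435 - 1) * ((1 / 179 : ℚ) • Lambda 4435 - 1) =
      (5 : ℚ) • Lambda 4435 + 1 := by
  have key := aeval_eq_of_mul_self_eq_smul (by norm_num) (Lambda_mul_self 4435)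
    (p := (C (1 / 676) * X - 1) * (C (1 / 379) * X - 1) * (C (1 / 266) * X - 1)
      * (C (1 / 179) * X - 1)) (q := C 5 * X + 1) (by norm_num) (by norm_num)
  simpa [Algebra.smul_def] using key
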